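/- arXiv:2303.01092 — 2 statements merged into one kernel-verified Lean document; each statement's English description precedes it below -/
import Mathlib

section
/- Fix a representation f with L_AR(f; D) := E_X sup_{A,A'∈𝒜} ‖f(A(X)) − f(A'(X))‖² and for each transformation A let h_A be a minimizer of h ↦ R(h∘f; D_A) over linear maps of bounded norm. Then for any A, A' ∈ 𝒜, |R(h_A∘f; D_{A'}) − R(h_{A'}∘f; D_{A'})| ≤ 2c·(‖h_A‖ + ‖h_{A'}‖)·L_AR(f; D), where c is the constant from the cross-domain risk comparison bound. -/
open MeasureTheory

/-- Theorem 5.1, second part: if h_A minimizes the risk on domain D_A for each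
transformation A, and the cross-domain risk comparison bound holds with constant c,
then the excess risk of transferring h_A to domain D_{A'} is at most
2c(‖h_A‖ + ‖h_{A'}‖) L_AR(f; D). -/
theorem stmt_4 {X : Type*} [MeasurableSpace X] (m K : ℕ) {ι : Type*}
    (D : Measure (X × EuclideanSpace ℝ (Fin K))) [IsProbabilityMeasure D]
    (Aug : ι → X → X) (f : X → EuclideanSpace ℝ (Fin m))
    (hf : ∀ x, ‖f x‖ = 1)
    (R : (EuclideanSpace ℝ (Fin m) →L[ℝ] EuclideanSpace ℝ (Fin K)) → ι → ℝ)
    (hR : ∀ h A, R h A = ∫ p, ‖h (f (Aug A p.1)) - p.2‖ ^ 2 ∂D)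
    (LAR : ℝ)
    (hLAR : LAR = ∫ p, ⨆ A : ι, ⨆ A' : ι, ‖f (Aug A p.1) - f (Aug A' p.1)‖ ^ 2 ∂D)
    (c : ℝ) (hc : 0 < c)
    -- the cross-domain risk comparison bound with constant c
    (hcomp : ∀ (h : EuclideanSpace ℝ (Fin m) →L[ℝ] EuclideanSpace ℝ (Fin K)) (A A' : ι),
      R h A - R h A' ≤ c * ‖h‖ * LAR)
    (hOpt : ι → EuclideanSpace ℝ (Fin m) →L[ℝ] EuclideanSpace ℝ (Fin K))
    -- h_A minimizes the risk on domain D_A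
    (hmin : ∀ (A : ι) (h' : EuclideanSpace ℝ (Fin m) →L[ℝ] EuclideanSpace ℝ (Fin K)),
      R (hOpt A) A ≤ R h' A) :
    ∀ A A' : ι,
      |R (hOpt A) A' - R (hOpt A') A'| ≤ 2 * c * (‖hOpt A‖ + ‖hOpt A'‖) * LAR := by
  intro A A'
  have h1 := hcomp (hOpt A) A' A
  have h2 := hmin A (hOpt A')
  have h3 := hcomp (hOpt A') A A'
  have nn1 : 0 ≤ c * ‖hOpt A‖ * LAR := by have := hcomp (hOpt A) A A; linarith
  have nn2 : 0 ≤ c * ‖hOpt A'‖ * LAR := by have := hcomp (hOpt A') A' A'; linarith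
  have hge : 0 ≤ R (hOpt A) A' - R (hOpt A') A' := by
    have := hmin A' (hOpt A); linarith
  rw [abs_of_nonneg hge]
  nlinarith [nn1, nn2, h1, h2, h3]
end

section
/- Let X = (X₁, X₂) with X₁, X₂ independent N(0,1) and Y = 1(X₁ ≥ 0). For the domain D_c (samples (X₁, c·X₂)) and the linear classifier g_w(x) = 1(w₁x₁ + w₂x₂ ≥ 0) with w₁ > 0, the 0-1 risk on D_c equals (1/π)·arctan(|c·w₂/w₁|). -/
/-!
Write `a = c w₂ / w₁`, so that the classifier is `1(x₁ + a x₂ ≥ 0)`. Given `X₂ = y`, it disagrees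
with `1(X₁ ≥ 0)` exactly when `X₁` lies between `0` and `-a y`, an event of probability
`Φ₀(|a| |y|)`, where `Φ₀(t) = ∫₀ᵗ φ` for the standard normal density `φ`. Hence the risk is
`R(|a|)` with `R(b) = 𝔼 Φ₀(b |X₂|)`. Differentiating under the expectation,
`R'(b) = 𝔼 [|X₂| φ(b X₂)] = 1 / (π (1 + b²))`, an elementary Gaussian integral, and `R(0) = 0`,
so `R(b) = arctan b / π`.
-/

open MeasureTheory ProbabilityTheory Real Set Filter

local notation "γ" => gaussianReal 0 1
local notation "φ" => gaussianPDFReal 0 1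

lemma gaussianPDFReal_zero_one (x : ℝ) : φ x = (√(2 * π))⁻¹ * exp (-x ^ 2 / 2) := by
  simp [gaussianPDFReal]

lemma gaussianPDFReal_zero_one_neg (x : ℝ) : φ (-x) = φ x := by
  simp [gaussianPDFReal_zero_one]

lemma gaussianPDFReal_zero_one_le (x : ℝ) : φ x ≤ (√(2 * π))⁻¹ := by
  rw [gaussianPDFReal_zero_one]
  exact mul_le_of_le_one_right (by positivity) (exp_le_one_iff.2 (by nlinarith [sq_nonneg x]))

lemma continuous_gaussianPDFReal_zero_one : Continuous φ := by
  simp_rw [funext gaussianPDFReal_zero_one]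
  fun_prop

noncomputable def gaussianPrimitive (t : ℝ) : ℝ := ∫ x in 0..t, φ x

@[simp]
lemma gaussianPrimitive_zero : gaussianPrimitive 0 = 0 :=
  intervalIntegral.integral_same

lemma hasDerivAt_gaussianPrimitive (t : ℝ) : HasDerivAt gaussianPrimitive (φ t) t :=
  intervalIntegral.integral_hasDerivAt_right (integrable_gaussianPDFReal 0 1).intervalIntegrable
    (continuous_gaussianPDFReal_zero_one.stronglyMeasurableAtFilter _ _)
    continuous_gaussianPDFReal_zero_one.continuousAt

@[fun_prop]
lemma continuous_gaussianPrimitive : Continuous gaussianPrimitive :=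
  continuous_iff_continuousAt.2 fun t ↦ (hasDerivAt_gaussianPrimitive t).continuousAt

lemma gaussianPrimitive_neg (t : ℝ) : gaussianPrimitive (-t) = -gaussianPrimitive t := by
  have h := intervalIntegral.integral_comp_neg (a := 0) (b := t) φ
  simp only [gaussianPDFReal_zero_one_neg, neg_zero] at h
  rw [gaussianPrimitive, gaussianPrimitive, intervalIntegral.integral_symm, h]

lemma gaussianPrimitive_nonneg {t : ℝ} (ht : 0 ≤ t) : 0 ≤ gaussianPrimitive t :=
  intervalIntegral.integral_nonneg ht fun x _ ↦ gaussianPDFReal_nonneg 0 1 x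

lemma abs_gaussianPrimitive (t : ℝ) : |gaussianPrimitive t| = gaussianPrimitive |t| := by
  rcases le_total 0 t with ht | ht
  · rw [abs_of_nonneg ht, abs_of_nonneg (gaussianPrimitive_nonneg ht)]
  · rw [abs_of_nonpos ht, ← abs_neg, ← gaussianPrimitive_neg,
      abs_of_nonneg (gaussianPrimitive_nonneg (neg_nonneg.2 ht))]

lemma abs_gaussianPrimitive_le (t : ℝ) : |gaussianPrimitive t| ≤ (√(2 * π))⁻¹ * |t| := by
  have := intervalIntegral.norm_integral_le_of_norm_le_const (a := 0) (b := t)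
    (f := φ) fun x _ ↦ by
      rw [norm_of_nonneg (gaussianPDFReal_nonneg 0 1 x)]; exact gaussianPDFReal_zero_one_le x
  simpa [gaussianPrimitive, mul_comm] using this

lemma disagreementSlice_eq_neg_preimage_uIoc (t : ℝ) :
    {x : ℝ | ¬(0 ≤ x + t ↔ 0 ≤ x)} = Neg.neg ⁻¹' uIoc 0 t := by
  ext x
  simp only [mem_ofPred_eq, mem_preimage, mem_uIoc]
  grind

lemma gaussianReal_disagreementSlice (t : ℝ) :
    γ {x : ℝ | ¬(0 ≤ x + t ↔ 0 ≤ x)} = ENNReal.ofReal |gaussianPrimitive t| := by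
  rw [disagreementSlice_eq_neg_preimage_uIoc, ← Measure.map_apply measurable_neg measurableSet_uIoc,
    gaussianReal_map_neg, neg_zero, gaussianReal_apply_eq_integral 0 one_ne_zero,
    gaussianPrimitive, intervalIntegral.abs_integral_eq_abs_integral_uIoc,
    abs_of_nonneg (setIntegral_nonneg measurableSet_uIoc fun x _ ↦ gaussianPDFReal_nonneg 0 1 x)]

lemma integrable_abs_gaussianReal : Integrable (fun y ↦ |y|) γ :=
  ((memLp_id_gaussianReal 1).integrable le_rfl).abs

lemma integrable_gaussianPrimitive_mul_abs (b : ℝ) :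
    Integrable (fun y ↦ gaussianPrimitive (b * |y|)) γ := by
  refine (integrable_abs_gaussianReal.const_mul ((√(2 * π))⁻¹ * |b|)).mono'
    (by fun_prop) (ae_of_all _ fun y ↦ ?_)
  simpa [abs_mul, mul_assoc] using abs_gaussianPrimitive_le (b * |y|)

lemma measurableSet_disagreement (a : ℝ) :
    MeasurableSet {p : ℝ × ℝ | ¬(0 ≤ p.1 + a * p.2 ↔ 0 ≤ p.1)} := by
  have h₁ : MeasurableSet {p : ℝ × ℝ | 0 ≤ p.1 + a * p.2} :=
    measurableSet_le (by fun_prop) (by fun_prop)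
  have h₂ : MeasurableSet {p : ℝ × ℝ | 0 ≤ p.1} := measurableSet_le (by fun_prop) (by fun_prop)
  exact (h₁.iff h₂).compl

lemma prod_gaussianReal_disagreement (a : ℝ) :
    Measure.prod γ γ {p : ℝ × ℝ | ¬(0 ≤ p.1 + a * p.2 ↔ 0 ≤ p.1)} =
      ENNReal.ofReal (∫ y, gaussianPrimitive (|a| * |y|) ∂γ) := by
  rw [Measure.prod_apply_symm (measurableSet_disagreement a)]
  simp only [preimage_ofPred_eq, gaussianReal_disagreementSlice, abs_gaussianPrimitive, abs_mul]
  exact (ofReal_integral_eq_lintegral_ofReal (integrable_gaussianPrimitive_mul_abs _)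
    (ae_of_all _ fun y ↦ gaussianPrimitive_nonneg (by positivity))).symm

lemma integral_Ioi_mul_exp_neg_mul_sq {k : ℝ} (hk : 0 < k) :
    ∫ r in Ioi (0 : ℝ), r * exp (-k * r ^ 2) = (2 * k)⁻¹ := by
  have h := integral_mul_cexp_neg_mul_sq (b := (k : ℂ)) (by simpa using hk)
  have : ((∫ r in Ioi (0 : ℝ), r * exp (-k * r ^ 2) : ℝ) : ℂ) = ((2 * k)⁻¹ : ℝ) := by
    rw [← integral_complex_ofReal]
    push_cast
    exact h
  exact_mod_cast this

lemma integral_abs_mul_gaussianPDFReal_mul_abs (b : ℝ) :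
    ∫ y, |y| * φ (b * |y|) ∂γ = (π * (1 + b ^ 2))⁻¹ := by
  set k := (1 + b ^ 2) / 2 with hk_def
  have hk : 0 < k := by positivity
  have hsq : (√(2 * π))⁻¹ * (√(2 * π))⁻¹ = (2 * π)⁻¹ := by
    rw [← mul_inv, mul_self_sqrt (by positivity)]
  have hprod (y : ℝ) :
      φ y * (|y| * φ (b * |y|)) = (2 * π)⁻¹ * (|y| * exp (-k * |y| ^ 2)) := by
    have hexp : exp (-y ^ 2 / 2) * exp (-(b * |y|) ^ 2 / 2) = exp (-k * |y| ^ 2) := by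
      rw [← exp_add, hk_def, mul_pow, sq_abs]
      ring_nf
    simp only [gaussianPDFReal_zero_one]
    linear_combination ((√(2 * π))⁻¹ * (√(2 * π))⁻¹ * |y|) * hexp +
      (|y| * exp (-k * |y| ^ 2)) * hsq
  rw [integral_gaussianReal_eq_integral_smul one_ne_zero]
  simp_rw [smul_eq_mul, hprod]
  rw [integral_const_mul, integral_comp_abs (f := fun r ↦ r * exp (-k * r ^ 2)),
    integral_Ioi_mul_exp_neg_mul_sq hk, hk_def]
  field_simp

lemma hasDerivAt_integral_gaussianPrimitive_mul_abs (b : ℝ) :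
    HasDerivAt (fun b ↦ ∫ y, gaussianPrimitive (b * |y|) ∂γ) (π * (1 + b ^ 2))⁻¹ b := by
  have h := hasDerivAt_integral_of_dominated_loc_of_deriv_le (μ := γ)
    (F := fun b y ↦ gaussianPrimitive (b * |y|)) (F' := fun b y ↦ |y| * φ (b * |y|))
    (bound := fun y ↦ (√(2 * π))⁻¹ * |y|) (x₀ := b) univ_mem
    (.of_forall fun _ ↦ by fun_prop) (integrable_gaussianPrimitive_mul_abs b)
    (by fun_prop) (ae_of_all _ fun y x _ ↦ ?_)
    (integrable_abs_gaussianReal.const_mul _) (ae_of_all _ fun y x _ ↦ ?_)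
  · exact integral_abs_mul_gaussianPDFReal_mul_abs b ▸ h.2
  · rw [norm_mul, norm_abs_eq_norm, norm_of_nonneg (gaussianPDFReal_nonneg 0 1 _), mul_comm]
    exact mul_le_mul_of_nonneg_right (gaussianPDFReal_zero_one_le _) (abs_nonneg y)
  · exact ((hasDerivAt_gaussianPrimitive _).comp x (hasDerivAt_mul_const |y|)).congr_deriv
      (mul_comm _ _)

lemma integral_gaussianPrimitive_mul_abs (b : ℝ) :
    ∫ y, gaussianPrimitive (b * |y|) ∂γ = arctan b / π := by
  have h := intervalIntegral.integral_eq_sub_of_hasDerivAt (a := 0) (b := b)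
    (fun x _ ↦ hasDerivAt_integral_gaussianPrimitive_mul_abs x)
    (by apply Continuous.intervalIntegrable; fun_prop (disch := intro; positivity))
  simp only [zero_mul, gaussianPrimitive_zero, integral_zero,
    sub_zero, mul_inv, intervalIntegral.integral_const_mul, integral_inv_one_add_sq,
    arctan_zero] at h
  rw [← h]
  ring

lemma prod_gaussianReal_disagreement_toReal (a : ℝ) :
    (Measure.prod γ γ {p : ℝ × ℝ | ¬(0 ≤ p.1 + a * p.2 ↔ 0 ≤ p.1)}).toReal =
      1 / π * arctan |a| := by
  rw [prod_gaussianReal_disagreement, integral_gaussianPrimitive_mul_abs,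
    ENNReal.toReal_ofReal (div_nonneg (arctan_nonneg.2 (abs_nonneg a)) pi_pos.le)]
  ring

/-- In the 2D Gaussian toy model with label Y = 1(X₁ ≥ 0), the 0-1 risk on domain
D_c (second coordinate scaled by c) of the linear classifier 1(w₁x₁ + w₂x₂ ≥ 0) with
w₁ > 0 equals (1/π)·arctan|c w₂ / w₁|. -/
theorem stmt_12 (c w₁ w₂ : ℝ) (hw₁ : 0 < w₁) :
    (((gaussianReal 0 1).prod (gaussianReal 0 1))
        {p : ℝ × ℝ | ¬ ((0 ≤ w₁ * p.1 + w₂ * (c * p.2)) ↔ 0 ≤ p.1)}).toReal =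
      (1 / Real.pi) * Real.arctan |c * w₂ / w₁| := by
  have hset : {p : ℝ × ℝ | ¬ ((0 ≤ w₁ * p.1 + w₂ * (c * p.2)) ↔ 0 ≤ p.1)} =
      {p : ℝ × ℝ | ¬(0 ≤ p.1 + c * w₂ / w₁ * p.2 ↔ 0 ≤ p.1)} := by
    ext p
    have h : w₁ * p.1 + w₂ * (c * p.2) = w₁ * (p.1 + c * w₂ / w₁ * p.2) := by
      field_simp
    simp only [mem_ofPred_eq, h, mul_nonneg_iff_of_pos_left hw₁]
  rw [hset, prod_gaussianReal_disagreement_toReal]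
end
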